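/- arXiv:2211.16432 — 2 statements merged into one kernel-verified Lean document; each statement's English description precedes it below -/
import Mathlib

section
/- Let G be an edge-minimal counterexample to the statement 'every graph without isolated vertices and isolated edges satisfies γ_tg(G) ≤ 3n/4'. Then no vertex of G is adjacent to two or more leaves. -/
open scoped Classical

namespace GameTD

/-- A move `v` is legal w.r.t. selected set `S` in the total domination game:
`v` totally dominates some vertex not yet totally dominated. -/
def Legal {V : Type*} (G : SimpleGraph V) (S : Finset V) (v : V) : Prop :=
  ∃ w, G.Adj v w ∧ ∀ u ∈ S, ¬ G.Adj u w

theorem Legal.not_mem {V : Type*} {G : SimpleGraph V} {S : Finset V} {v : V}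
    (h : Legal G S v) : v ∉ S := by
  rcases h with ⟨w, hadj, hw⟩
  intro hv
  exact hw v hv hadj

/-- The value of the total domination game from position `S`, with `b = true`
meaning Dominator (the minimizer) to move. The game ends when no legal move exists. -/
noncomputable def val {V : Type*} [Fintype V] (G : SimpleGraph V) (b : Bool) (S : Finset V) : ℕ :=
  let L := Finset.univ.filter (fun v => Legal G S v)
  if h : L.Nonempty then
    have hL : L.attach.Nonempty := h.attach
    if b then
      1 + L.attach.inf' hL (fun v => val G false (insert v.1 S))
    else
      1 + L.attach.sup' hL (fun v => val G true (insert v.1 S))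
  else 0
termination_by (Finset.univ \ S).card
decreasing_by
  all_goals {
    have hv : Legal G S v.1 := by
      have := v.2
      try simp only [Finset.mem_filter] at this
      exact (Finset.mem_filter.mp v.2).2
    have hvS : v.1 ∉ S := hv.not_mem
    apply Finset.card_lt_card
    constructor
    · intro x hx
      simp only [Finset.mem_sdiff] at hx ⊢
      exact ⟨hx.1, fun hmem => hx.2 (Finset.mem_insert_of_mem hmem)⟩
    · intro hsub
      have : v.1 ∈ Finset.univ \ S := by
        simp [hvS]
      have := hsub this
      simp at this
  }

/-- The game total domination number: Dominator starts from the empty position. -/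
noncomputable def gammaTG {V : Type*} [Fintype V] (G : SimpleGraph V) : ℕ :=
  val G true ∅

end GameTD

/-!
Let `y, z` be leaves at `x`. If `x` has a third neighbour, then `y` and `z` are non-adjacent
twins: collapsing `z` onto `y` turns every position of the game on `G` into a position of the game
on `G - z` with the same legal moves, so `γ_tg(G) = γ_tg(G - z)`, while `G - z` has fewer edges and
still no isolated vertex or edge.

Otherwise `{x, y, z}` is a `P₃` component, on which every game lasts exactly two moves. Dominator
keeps the number of moves left on the `P₃` even whenever it is his turn: he plays optimally in
`G - P₃`, and answers a Staller move in the `P₃` by the last one there. Hence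
`γ_tg(G) ≤ γ_tg(G - P₃) + 2 ≤ 3 (n - 3) / 4 + 2 < 3 n / 4`.
-/

namespace SimpleGraph

variable {V : Type*} {G : SimpleGraph V}

def NoIsolatedVertex (G : SimpleGraph V) : Prop :=
  ∀ v, ∃ w, G.Adj v w

def HasIsolatedEdge (G : SimpleGraph V) : Prop :=
  ∃ u v, G.Adj u v ∧ (∀ w, G.Adj u w → w = v) ∧ (∀ w, G.Adj v w → w = u)

theorem adj_iff_of_degree_eq_one {x y : V} [Fintype (G.neighborSet y)] (hy : G.degree y = 1)
    (hyx : G.Adj y x) (w : V) : G.Adj y w ↔ w = x := by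
  obtain ⟨u, -, hu⟩ := degree_eq_one_iff_existsUnique_adj.1 hy
  exact ⟨fun h => (hu w h).trans (hu x hyx).symm, fun h => h ▸ hyx⟩

theorem card_edgeFinset_induce_lt {s : Set V} [Fintype G.edgeSet] [Fintype (G.induce s).edgeSet]
    {a b : V} (hab : G.Adj a b) (hb : b ∉ s) :
    (G.induce s).edgeFinset.card < G.edgeFinset.card := by
  rw [edgeFinset_card, edgeFinset_card]
  refine Fintype.card_lt_of_injective_of_notMem (Embedding.induce s).mapEdgeSet
    (Embedding.induce s).mapEdgeSet.injective (b := ⟨s(a, b), hab⟩) ?_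
  rintro ⟨⟨e, he⟩, hea⟩
  induction e using Sym2.ind with
  | _ u w =>
  have hedge : s(u.1, w.1) = s(a, b) := congrArg Subtype.val hea
  rcases Sym2.mem_iff.1 (hedge ▸ Sym2.mem_mk_right a b) with rfl | rfl
  exacts [hb u.2, hb w.2]

def KeepsTwoNeighbours (G : SimpleGraph V) (s : Set V) : Prop :=
  ∀ u ∈ s, (∃ w ∉ s, G.Adj u w) → ∃ a ∈ s, ∃ b ∈ s, a ≠ b ∧ G.Adj u a ∧ G.Adj u b

theorem keepsTwoNeighbours_of_closed {s : Set V} (hs : ∀ u w, G.Adj u w → u ∈ s → w ∈ s) :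
    G.KeepsTwoNeighbours s :=
  fun u hu ⟨w, hw, huw⟩ => absurd (hs u w huw hu) hw

theorem keepsTwoNeighbours_compl_singleton {x y w z : V} (hz : ∀ v, G.Adj z v ↔ v = x)
    (hxy : G.Adj x y) (hxw : G.Adj x w) (hyw : y ≠ w) (hyz : y ≠ z) (hwz : w ≠ z) :
    G.KeepsTwoNeighbours {z}ᶜ := by
  rintro u - ⟨v, hv, huv⟩
  obtain rfl : v = z := by simpa using hv
  obtain rfl : u = x := (hz u).1 huv.symm
  exact ⟨y, hyz, w, hwz, hyw, hxy, hxw⟩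

section Induce

variable {s : Set V} (hs : G.KeepsTwoNeighbours s)
include hs

theorem NoIsolatedVertex.induce (hG : G.NoIsolatedVertex) : (G.induce s).NoIsolatedVertex := by
  rintro ⟨v, hv⟩
  obtain ⟨w, hvw⟩ := hG v
  by_cases hw : w ∈ s
  · exact ⟨⟨w, hw⟩, hvw⟩
  · obtain ⟨a, ha, -, -, -, hva, -⟩ := hs v hv ⟨w, hw, hvw⟩
    exact ⟨⟨a, ha⟩, hva⟩

theorem not_hasIsolatedEdge_induce (hG : ¬ G.HasIsolatedEdge) :
    ¬ (G.induce s).HasIsolatedEdge := by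
  rintro ⟨u, v, huv, hu, hv⟩
  have lift : ∀ u v : s, (∀ w, (G.induce s).Adj u w → w = v) → ∀ w, G.Adj u w → w = v := by
    intro u v hu w huw
    by_cases hw : w ∈ s
    · exact congrArg Subtype.val (hu ⟨w, hw⟩ huw)
    · obtain ⟨a, ha, b, hb, hab, hua, hub⟩ := hs u u.2 ⟨w, hw, huw⟩
      exact absurd (congrArg Subtype.val ((hu ⟨a, ha⟩ hua).trans (hu ⟨b, hb⟩ hub).symm)) hab
  exact hG ⟨u, v, huv, lift u v hu, lift v u hv⟩

end Induce

theorem mem_compl_triple_of_adj {x y z : V} (hx : ∀ w, G.Adj x w ↔ w = y ∨ w = z)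
    (hy : ∀ w, G.Adj y w ↔ w = x) (hz : ∀ w, G.Adj z w ↔ w = x) (u w : V) (huw : G.Adj u w)
    (hu : u ∈ ({x, y, z} : Set V)ᶜ) : w ∈ ({x, y, z} : Set V)ᶜ := by
  intro hw
  simp only [Set.mem_compl_iff, Set.mem_insert_iff, Set.mem_singleton_iff, not_or] at hu hw
  rcases hw with rfl | rfl | rfl
  · rcases (hx u).1 huw.symm with rfl | rfl <;> tauto
  · exact hu.1 ((hy u).1 huw.symm)
  · exact hu.1 ((hz u).1 huw.symm)

end SimpleGraph

theorem Fintype.card_compl_triple_add_three_le {V : Type*} [Fintype V] {x y z : V} (hxy : x ≠ y)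
    (hxz : x ≠ z) (hyz : y ≠ z) [Fintype ↥({x, y, z} : Set V)ᶜ] :
    Fintype.card ↥({x, y, z} : Set V)ᶜ + 3 ≤ Fintype.card V := by
  have h3 : ({x, y, z} : Finset V).card = 3 := by
    simp [Finset.card_insert_of_notMem, hxy, hxz, hyz]
  have := Finset.card_le_univ ({x, y, z} : Finset V)
  rw [Fintype.card_compl_set, ← Set.toFinset_card]
  simp only [Set.toFinset_insert, Set.toFinset_singleton, h3]
  omega

namespace GameTD

section Basic

variable {V : Type*} [Fintype V] {G : SimpleGraph V} {S : Finset V} {v : V}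

omit [Fintype V] in
theorem lt_insert_of_legal (hv : Legal G S v) : S < insert v S :=
  Finset.ssubset_insert hv.not_mem

theorem val_eq_zero (h : ∀ v, ¬ Legal G S v) (b : Bool) : val G b S = 0 := by
  rw [val.eq_def]
  simp [h]

theorem val_true_le (hv : Legal G S v) : val G true S ≤ 1 + val G false (insert v S) := by
  rw [val.eq_def]
  have hmem : v ∈ Finset.univ.filter (fun v => Legal G S v) := by simp [hv]
  rw [dif_pos ⟨v, hmem⟩, if_pos rfl]
  exact Nat.add_le_add_left
    (Finset.inf'_le (fun v => val G false (insert v.1 S)) (Finset.mem_attach _ ⟨v, hmem⟩)) 1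

theorem le_val_false (hv : Legal G S v) : 1 + val G true (insert v S) ≤ val G false S := by
  rw [val.eq_def (b := false)]
  have hmem : v ∈ Finset.univ.filter (fun v => Legal G S v) := by simp [hv]
  rw [dif_pos ⟨v, hmem⟩, if_neg Bool.false_ne_true]
  exact Nat.add_le_add_left
    (Finset.le_sup' (fun v => val G true (insert v.1 S)) (Finset.mem_attach _ ⟨v, hmem⟩)) 1

theorem exists_val_eq (h : ∃ v, Legal G S v) (b : Bool) :
    ∃ v, Legal G S v ∧ val G b S = 1 + val G (!b) (insert v S) := by
  obtain ⟨v₀, hv₀⟩ := h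
  have hne : (Finset.univ.filter (fun v => Legal G S v)).Nonempty := ⟨v₀, by simp [hv₀]⟩
  rw [val.eq_def, dif_pos hne]
  cases b
  · obtain ⟨w, -, hw⟩ := Finset.exists_mem_eq_sup' hne.attach fun v => val G true (insert v.1 S)
    exact ⟨w, (Finset.mem_filter.mp w.2).2, by simp [hw]⟩
  · obtain ⟨w, -, hw⟩ := Finset.exists_mem_eq_inf' hne.attach fun v => val G false (insert v.1 S)
    exact ⟨w, (Finset.mem_filter.mp w.2).2, by simp [hw]⟩

theorem val_le_of_forall_legal {n : ℕ} (b : Bool)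
    (h : ∀ v, Legal G S v → 1 + val G (!b) (insert v S) ≤ n) : val G b S ≤ n := by
  by_cases hS : ∃ v, Legal G S v
  · obtain ⟨v, hv, hval⟩ := exists_val_eq hS b
    exact hval ▸ h v hv
  · simp [val_eq_zero fun v hv => hS ⟨v, hv⟩]

end Basic

section Comparison

variable {V W : Type*} [Fintype V] [Fintype W] {G : SimpleGraph V} {H : SimpleGraph W}
  {S : Finset V} {T : Finset W}

theorem val_eq_val_of_options (b : Bool)
    (h : ∀ n, (∃ v, Legal G S v ∧ val G (!b) (insert v S) = n) ↔
      (∃ w, Legal H T w ∧ val H (!b) (insert w T) = n)) :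
    val G b S = val H b T := by
  by_cases hS : ∃ v, Legal G S v
  · obtain ⟨v, hv, hvalG⟩ := exists_val_eq hS b
    obtain ⟨w, hw, hvw⟩ := (h _).1 ⟨v, hv, rfl⟩
    obtain ⟨w', hw', hvalH⟩ := exists_val_eq ⟨w, hw⟩ b
    obtain ⟨v', hv', hvw'⟩ := (h _).2 ⟨w', hw', rfl⟩
    cases b <;> simp only [Bool.not_false, Bool.not_true] at hvalG hvalH hvw hvw'
    · have := le_val_false hw
      have := le_val_false hv'
      omega
    · have := val_true_le hw
      have := val_true_le hv'
      omega
  · have hT : ¬ ∃ w, Legal H T w := fun ⟨w, hw⟩ => by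
      obtain ⟨v, hv, -⟩ := (h _).2 ⟨w, hw, rfl⟩
      exact hS ⟨v, hv⟩
    rw [val_eq_zero (fun v hv => hS ⟨v, hv⟩), val_eq_zero (fun w hw => hT ⟨w, hw⟩)]

omit [Fintype V] [Fintype W] in
theorem legal_comap_iff {f : V → W} (hf : f.Surjective) {v : V} :
    Legal (H.comap f) S v ↔ Legal H (S.image f) (f v) := by
  constructor
  · rintro ⟨w, hvw, hw⟩
    exact ⟨f w, hvw, by simpa using hw⟩
  · rintro ⟨w', hvw, hw⟩
    obtain ⟨w, rfl⟩ := hf w'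
    exact ⟨w, hvw, fun u hu => hw (f u) (Finset.mem_image_of_mem f hu)⟩

theorem val_comap_of_surjective (H : SimpleGraph W) {f : V → W} (hf : f.Surjective) (b : Bool)
    (S : Finset V) : val (H.comap f) b S = val H b (S.image f) := by
  induction S using WellFoundedGT.induction generalizing b with
  | _ S ih =>
  refine val_eq_val_of_options b fun n => ⟨?_, ?_⟩
  · rintro ⟨v, hv, rfl⟩
    refine ⟨f v, (legal_comap_iff hf).1 hv, ?_⟩
    rw [ih _ (lt_insert_of_legal hv), Finset.image_insert]
  · rintro ⟨w, hw, rfl⟩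
    obtain ⟨v, rfl⟩ := hf w
    have hv := (legal_comap_iff hf).2 hw
    refine ⟨v, hv, ?_⟩
    rw [ih _ (lt_insert_of_legal hv), Finset.image_insert]

end Comparison

section Twins

variable {V : Type*} {G : SimpleGraph V} {y z : V}

def collapse [DecidableEq V] (hyz : y ≠ z) (v : V) : ({z}ᶜ : Set V) :=
  if h : v = z then ⟨y, hyz⟩ else ⟨v, h⟩

theorem collapse_surjective [DecidableEq V] (hyz : y ≠ z) : (collapse hyz).Surjective :=
  fun v => ⟨v, dif_neg v.2⟩

theorem comap_collapse [DecidableEq V] (hyz : y ≠ z) (htwin : ∀ w, G.Adj y w ↔ G.Adj z w) :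
    (G.induce {z}ᶜ).comap (collapse hyz) = G := by
  have hcollapse : ∀ u w, G.Adj (collapse hyz u) w ↔ G.Adj u w := by
    intro u w
    unfold collapse
    split_ifs with hu
    · exact hu ▸ htwin w
    · rfl
  ext u w
  simp only [SimpleGraph.comap_adj, Function.Embedding.coe_subtype]
  rw [hcollapse, G.adj_comm, hcollapse, G.adj_comm]

theorem gammaTG_induce_compl_singleton_of_twins [Fintype V] [Fintype ({z}ᶜ : Set V)]
    (hyz : y ≠ z) (htwin : ∀ w, G.Adj y w ↔ G.Adj z w) :
    gammaTG (G.induce {z}ᶜ) = gammaTG G := by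
  conv_rhs => rw [← comap_collapse hyz htwin]
  rw [gammaTG, gammaTG, val_comap_of_surjective _ (collapse_surjective hyz)]
  simp

end Twins

section Countdown

variable {V W : Type*} [Fintype V] [Fintype W]

/-- The game on `G`, observed through `p`, is the game on `H` interleaved with a countdown `r`. -/
structure IsCountdownSum (G : SimpleGraph V) (H : SimpleGraph W) (p : Finset V → Finset W)
    (r : Finset V → ℕ) : Prop where
  legal : ∀ S v, Legal G S v →
    (p (insert v S) = p S ∧ r (insert v S) + 1 = r S) ∨
      ∃ w, Legal H (p S) w ∧ p (insert v S) = insert w (p S) ∧ r (insert v S) = r S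
  lift : ∀ S w, Legal H (p S) w →
    ∃ v, Legal G S v ∧ p (insert v S) = insert w (p S) ∧ r (insert v S) = r S
  countdown : ∀ S, 0 < r S →
    ∃ v, Legal G S v ∧ p (insert v S) = p S ∧ r (insert v S) + 1 = r S

namespace IsCountdownSum

variable {G : SimpleGraph V} {H : SimpleGraph W} {p : Finset V → Finset W} {r : Finset V → ℕ}
  (h : IsCountdownSum G H p r)
include h

omit [Fintype W] in
theorem val_le_of_not_legal {S : Finset V} (hH : ∀ w, ¬ Legal H (p S) w) (b : Bool) :
    val G b S ≤ r S := by
  induction S using WellFoundedGT.induction generalizing b with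
  | _ S ih =>
  refine val_le_of_forall_legal b fun v hv => ?_
  rcases h.legal S v hv with ⟨hp, hr⟩ | ⟨w, hw, -⟩
  · have := ih _ (lt_insert_of_legal hv) (hp ▸ hH) (!b)
    omega
  · exact absurd hw (hH w)

theorem val_le_val_add (S : Finset V) :
    (Even (r S) → ∀ b, val G b S ≤ val H b (p S) + r S) ∧
      (Odd (r S) → val G true S ≤ val H false (p S) + r S) := by
  induction S using WellFoundedGT.induction with
  | _ S ih =>
  refine ⟨fun heven b => ?_, fun hodd => ?_⟩
  · cases b
    · refine val_le_of_forall_legal false fun v hv => ?_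
      have ih' := ih _ (lt_insert_of_legal hv)
      simp only [Bool.not_false]
      rcases h.legal S v hv with ⟨hp, hr⟩ | ⟨w, hw, hp, hr⟩
      · have hodd : Odd (r (insert v S)) := by
          rwa [← hr, Nat.even_add_one, Nat.not_even_iff_odd] at heven
        have := ih'.2 hodd
        rw [hp] at this
        omega
      · have hG := ih'.1 (hr ▸ heven) true
        have := le_val_false hw
        rw [hp, hr] at hG
        omega
    · by_cases hH : ∃ w, Legal H (p S) w
      · obtain ⟨w, hw, hval⟩ := exists_val_eq hH true
        obtain ⟨v, hv, hp, hr⟩ := h.lift S w hw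
        have hG := (ih _ (lt_insert_of_legal hv)).1 (hr ▸ heven) false
        have := val_true_le hv
        rw [hp, hr] at hG
        simp only [Bool.not_true] at hval
        omega
      · exact (h.val_le_of_not_legal (fun w hw => hH ⟨w, hw⟩) true).trans (Nat.le_add_left _ _)
  · obtain ⟨v, hv, hp, hr⟩ := h.countdown S hodd.pos
    have heven : Even (r (insert v S)) := by
      rwa [← hr, Nat.odd_add_one, Nat.not_odd_iff_even] at hodd
    have hG := (ih _ (lt_insert_of_legal hv)).1 heven false
    have := val_true_le hv
    rw [hp] at hG
    omega

theorem gammaTG_le (hp : p ∅ = ∅) (hr : Even (r ∅)) : gammaTG G ≤ gammaTG H + r ∅ := by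
  simpa [gammaTG, hp] using (h.val_le_val_add ∅).1 hr true

end IsCountdownSum

end Countdown

section ClosedSet

variable {V : Type*} {G : SimpleGraph V} {s : Set V}

theorem legal_induce_iff (hs : ∀ u w, G.Adj u w → u ∈ s → w ∈ s) {S : Finset V} {v : V}
    (hv : v ∈ s) : Legal (G.induce s) (S.subtype (· ∈ s)) ⟨v, hv⟩ ↔ Legal G S v := by
  constructor
  · rintro ⟨w, hvw, hw⟩
    refine ⟨w, hvw, fun u hu huw => ?_⟩
    exact hw ⟨u, hs w u huw.symm w.2⟩ (Finset.mem_subtype.2 hu) huw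
  · rintro ⟨w, hvw, hw⟩
    exact ⟨⟨w, hs v w hvw hv⟩, hvw, fun u hu => hw u (Finset.mem_subtype.1 hu)⟩

theorem isCountdownSum_induce [Fintype V] [Fintype s] (hs : ∀ u w, G.Adj u w → u ∈ s → w ∈ s)
    (r : Finset V → ℕ) (hr_mem : ∀ S v, v ∈ s → r (insert v S) = r S)
    (hr_not_mem : ∀ S v, v ∉ s → Legal G S v → r (insert v S) + 1 = r S)
    (hr_pos : ∀ S, 0 < r S → ∃ v ∉ s, Legal G S v) :
    IsCountdownSum G (G.induce s) (fun S => S.subtype (· ∈ s)) r := by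
  have hp_not_mem : ∀ (S : Finset V) v, v ∉ s →
      (insert v S).subtype (· ∈ s) = S.subtype (· ∈ s) := by
    intro S v hv
    ext u
    simp [show u.1 ≠ v from fun h => hv (h ▸ u.2)]
  refine ⟨fun S v hv => ?_, fun S w hw => ?_, fun S hS => ?_⟩
  · by_cases hvs : v ∈ s
    · refine Or.inr ⟨⟨v, hvs⟩, (legal_induce_iff hs hvs).2 hv, ?_, hr_mem S v hvs⟩
      ext u
      simp [Subtype.ext_iff]
    · exact Or.inl ⟨hp_not_mem S v hvs, hr_not_mem S v hvs hv⟩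
  · refine ⟨w, (legal_induce_iff hs w.2).1 hw, ?_, hr_mem S w w.2⟩
    ext u
    simp [Subtype.ext_iff]
  · obtain ⟨v, hvs, hv⟩ := hr_pos S hS
    exact ⟨v, hv, hp_not_mem S v hvs, hr_not_mem S v hvs hv⟩

end ClosedSet

section ThreeVertexPath

variable {V : Type*} {G : SimpleGraph V} {x y z : V} {S : Finset V}

theorem legal_center_iff (hx : ∀ w, G.Adj x w ↔ w = y ∨ w = z) (hy : ∀ w, G.Adj y w ↔ w = x)
    (hz : ∀ w, G.Adj z w ↔ w = x) : Legal G S x ↔ x ∉ S := by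
  simp [Legal, hx, G.adj_comm _ y, G.adj_comm _ z, hy, hz]

theorem legal_leaf_iff (hx : ∀ w, G.Adj x w ↔ w = y ∨ w = z) (hy : ∀ w, G.Adj y w ↔ w = x) :
    Legal G S y ↔ y ∉ S ∧ z ∉ S := by
  simp only [Legal, hy, exists_eq_left, G.adj_comm _ x, hx]
  grind

theorem gammaTG_le_gammaTG_induce_add_two [Fintype V] [Fintype ↥({x, y, z} : Set V)ᶜ]
    (hx : ∀ w, G.Adj x w ↔ w = y ∨ w = z) (hy : ∀ w, G.Adj y w ↔ w = x)
    (hz : ∀ w, G.Adj z w ↔ w = x) :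
    gammaTG G ≤ gammaTG (G.induce {x, y, z}ᶜ) + 2 := by
  have hxy : x ≠ y := G.ne_of_adj ((hx y).2 (Or.inl rfl))
  have hxz : x ≠ z := G.ne_of_adj ((hx z).2 (Or.inr rfl))
  have hx' : ∀ w, G.Adj x w ↔ w = z ∨ w = y := fun w => (hx w).trans or_comm
  -- `x ∉ S` means that `y, z` are not yet totally dominated, `y, z ∉ S` that `x` is not.
  refine (isCountdownSum_induce (SimpleGraph.mem_compl_triple_of_adj hx hy hz)
    (fun S => (if x ∈ S then 0 else 1) + (if y ∈ S ∨ z ∈ S then 0 else 1)) ?_ ?_ ?_).gammaTG_le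
    (by ext; simp) (by simp)
  · intro S v hv
    simp only [Set.mem_compl_iff, Set.mem_insert_iff, Set.mem_singleton_iff, not_or] at hv
    simp [Finset.mem_insert, Ne.symm hv.1, Ne.symm hv.2.1, Ne.symm hv.2.2]
  · intro S v hv hleg
    simp only [Set.mem_compl_iff, Set.mem_insert_iff, Set.mem_singleton_iff, not_not] at hv
    rcases hv with rfl | rfl | rfl
    · simp [(legal_center_iff hx hy hz).1 hleg, hxy.symm, hxz.symm, add_comm]
    · obtain ⟨hyS, hzS⟩ := (legal_leaf_iff hx hy).1 hleg
      simp [hyS, hzS, hxy]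
    · obtain ⟨hzS, hyS⟩ := (legal_leaf_iff hx' hz).1 hleg
      simp [hyS, hzS, hxz]
  · intro S hS
    by_cases hxS : x ∈ S
    · have hyzS : ¬ (y ∈ S ∨ z ∈ S) := fun h => by simp [hxS, h] at hS
      exact ⟨y, by simp, (legal_leaf_iff hx hy).2 (not_or.1 hyzS)⟩
    · exact ⟨x, by simp, (legal_center_iff hx hy hz).2 hxS⟩

end ThreeVertexPath

end GameTD

/-- If `G` is an edge-minimal counterexample to the 3/4-bound (among all finite
graphs without isolated vertices and without isolated edges), then no vertex of
`G` is adjacent to two or more leaves. -/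
theorem no_two_leaves_of_minimal_counterexample {V : Type} [Fintype V] (G : SimpleGraph V)
    (h_no_isolated_vertex : ∀ v : V, ∃ w, G.Adj v w)
    (h_no_isolated_edge :
      ¬ ∃ u v : V, G.Adj u v ∧ (∀ w, G.Adj u w → w = v) ∧ (∀ w, G.Adj v w → w = u))
    (h_counterexample : ¬ (4 * GameTD.gammaTG G ≤ 3 * Fintype.card V))
    (h_minimal : ∀ (W : Type) [Fintype W] (H : SimpleGraph W),
      (∀ v : W, ∃ w, H.Adj v w) →
      (¬ ∃ u v : W, H.Adj u v ∧ (∀ w, H.Adj u w → w = v) ∧ (∀ w, H.Adj v w → w = u)) →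
      H.edgeFinset.card < G.edgeFinset.card →
      4 * GameTD.gammaTG H ≤ 3 * Fintype.card W) :
    ∀ x : V, ¬ ∃ y z : V, y ≠ z ∧ G.degree y = 1 ∧ G.degree z = 1 ∧ G.Adj x y ∧ G.Adj x z := by
  rintro x ⟨y, z, hyz, hdy, hdz, hxy, hxz⟩
  have hy := G.adj_iff_of_degree_eq_one hdy hxy.symm
  have hz := G.adj_iff_of_degree_eq_one hdz hxz.symm
  have h_induce : ∀ (s : Set V) [Fintype s], G.KeepsTwoNeighbours s → ∀ a b, G.Adj a b → b ∉ s →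
      4 * GameTD.gammaTG (G.induce s) ≤ 3 * Fintype.card s := fun s _ hs a b hab hb =>
    h_minimal s (G.induce s) (SimpleGraph.NoIsolatedVertex.induce hs h_no_isolated_vertex)
      (SimpleGraph.not_hasIsolatedEdge_induce hs h_no_isolated_edge)
      (SimpleGraph.card_edgeFinset_induce_lt hab hb)
  apply h_counterexample
  by_cases hx : ∃ w, G.Adj x w ∧ w ≠ y ∧ w ≠ z
  · obtain ⟨w, hxw, hwy, hwz⟩ := hx
    have hmin := h_induce {z}ᶜ
      (G.keepsTwoNeighbours_compl_singleton hz hxy hxw hwy.symm hyz hwz) x z hxz (by simp)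
    rw [GameTD.gammaTG_induce_compl_singleton_of_twins hyz fun v => by rw [hy, hz]] at hmin
    have := Fintype.card_compl_set ({z} : Set V)
    omega
  · have hx : ∀ w, G.Adj x w ↔ w = y ∨ w = z := fun w => by
      refine ⟨fun hxw => ?_, by rintro (rfl | rfl) <;> assumption⟩
      by_contra hw
      exact hx ⟨w, hxw, by tauto⟩
    have hmin := h_induce {x, y, z}ᶜ (SimpleGraph.keepsTwoNeighbours_of_closed
      (G.mem_compl_triple_of_adj hx hy hz)) x y hxy (by simp)
    have := GameTD.gammaTG_le_gammaTG_induce_add_two hx hy hz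
    have := Fintype.card_compl_triple_add_three_le hxy.ne hxz.ne hyz
    omega
end

section
/- For any hypergraph H and any set A of vertices of H, the Edge-hitter-start game transversal number starting from A satisfies τ_g(H; A) ≤ τ'_g(H; A) + 1, where τ'_g(H; A) is the Staller-start game transversal number starting from A. -/
open scoped Classical

namespace TransversalGame

/-- A move `v` is legal w.r.t. the selected set `S` in the transversal game on a
hypergraph with edge set `E`: `v` lies in some edge disjoint from `S`. -/
def Legal {V : Type*} (E : Finset (Finset V)) (S : Finset V) (v : V) : Prop :=
  ∃ e ∈ E, v ∈ e ∧ ∀ u ∈ S, u ∉ e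

theorem Legal.not_mem {V : Type*} {E : Finset (Finset V)} {S : Finset V} {v : V}
    (h : Legal E S v) : v ∉ S := by
  rcases h with ⟨e, _, hv, hd⟩
  exact fun hvS => hd v hvS hv

/-- Value of the transversal game from position `S`; `b = true` means Edge-hitter
(the minimizer) to move. The game ends when the selected set is a transversal,
equivalently when no legal move exists. -/
noncomputable def val {V : Type*} [Fintype V] (E : Finset (Finset V)) (b : Bool) (S : Finset V) : ℕ :=
  let L := Finset.univ.filter (fun v => Legal E S v)
  if h : L.Nonempty then
    have hL : L.attach.Nonempty := h.attach
    if b then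
      1 + L.attach.inf' hL (fun v => val E false (insert v.1 S))
    else
      1 + L.attach.sup' hL (fun v => val E true (insert v.1 S))
  else 0
termination_by (Finset.univ \ S).card
decreasing_by
  all_goals {
    have hv : Legal E S v.1 := (Finset.mem_filter.mp v.2).2
    have hvS : v.1 ∉ S := hv.not_mem
    apply Finset.card_lt_card
    constructor
    · intro x hx
      simp only [Finset.mem_sdiff] at hx ⊢
      exact ⟨hx.1, fun hmem => hx.2 (Finset.mem_insert_of_mem hmem)⟩
    · intro hsub
      have hvmem : v.1 ∈ Finset.univ \ S := by simp [hvS]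
      have := hsub hvmem
      simp at this
  }

/-- Edge-hitter-start game transversal number starting from `A`. -/
noncomputable def tauG {V : Type*} [Fintype V] (E : Finset (Finset V)) (A : Finset V) : ℕ :=
  val E true A

/-- Staller-start game transversal number starting from `A`. -/
noncomputable def tauG' {V : Type*} [Fintype V] (E : Finset (Finset V)) (A : Finset V) : ℕ :=
  val E false A

end TransversalGame

/-!
The value of a position depends only on its *live* edges, those disjoint from the selected set,
and it can only decrease when the live edges shrink. This monotonicity is proved together with
the two inequalities `val true S ≤ val false S + 1` and `val false S ≤ val true S + 1`, by a
simultaneous induction on the number of unselected vertices. The key move is an imagination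
strategy: to compare a position with a smaller set of live edges against the original one,
Edge-hitter copies his optimal reply in the original position, and when that reply is illegal
he simply gives up the move, which leaves him in a position whose live edges are still a subset.
-/

namespace TransversalGame

variable {V : Type*} {E : Finset (Finset V)} {S T : Finset V} {v : V}

noncomputable def liveEdges (E : Finset (Finset V)) (S : Finset V) : Finset (Finset V) :=
  E.filter (Disjoint S)

@[simp]
theorem mem_liveEdges {e : Finset V} : e ∈ liveEdges E S ↔ e ∈ E ∧ Disjoint S e :=
  Finset.mem_filter

theorem legal_iff_exists_mem_liveEdges : Legal E S v ↔ ∃ e ∈ liveEdges E S, v ∈ e := by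
  simp only [Legal, mem_liveEdges, Finset.disjoint_left]
  tauto

theorem Legal.mono_liveEdges (hT : liveEdges E T ⊆ liveEdges E S) (hv : Legal E T v) :
    Legal E S v := by
  obtain ⟨e, he, hve⟩ := legal_iff_exists_mem_liveEdges.mp hv
  exact legal_iff_exists_mem_liveEdges.mpr ⟨e, hT he, hve⟩

theorem liveEdges_anti (h : S ⊆ T) : liveEdges E T ⊆ liveEdges E S := fun _ he =>
  mem_liveEdges.mpr ⟨(mem_liveEdges.mp he).1, (mem_liveEdges.mp he).2.mono_left h⟩

theorem liveEdges_insert_subset_insert (hT : liveEdges E T ⊆ liveEdges E S) (v : V) :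
    liveEdges E (insert v T) ⊆ liveEdges E (insert v S) := by
  intro e he
  rw [mem_liveEdges, Finset.disjoint_insert_left] at he ⊢
  obtain ⟨heE, hS⟩ := mem_liveEdges.mp (hT (mem_liveEdges.mpr ⟨he.1, he.2.2⟩))
  exact ⟨heE, he.2.1, hS⟩

theorem liveEdges_subset_insert_of_not_legal (hv : ¬ Legal E T v)
    (hT : liveEdges E T ⊆ liveEdges E S) : liveEdges E T ⊆ liveEdges E (insert v S) := by
  intro e he
  have hve : v ∉ e := fun hve => hv (legal_iff_exists_mem_liveEdges.mpr ⟨e, he, hve⟩)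
  obtain ⟨heE, hS⟩ := mem_liveEdges.mp (hT he)
  exact mem_liveEdges.mpr ⟨heE, Finset.disjoint_insert_left.mpr ⟨hve, hS⟩⟩

variable [Fintype V]

theorem val_of_forall_not_legal (h : ∀ v, ¬ Legal E S v) (b : Bool) : val E b S = 0 := by
  rw [val]
  simp [h]

theorem val_true_le (hv : Legal E S v) : val E true S ≤ val E false (insert v S) + 1 := by
  have hv' : v ∈ Finset.univ.filter (Legal E S) := Finset.mem_filter.mpr ⟨Finset.mem_univ v, hv⟩
  rw [val, dif_pos ⟨v, hv'⟩, if_pos rfl, add_comm]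
  gcongr
  exact Finset.inf'_le _ (Finset.mem_attach _ ⟨v, hv'⟩)

theorem le_val_false (hv : Legal E S v) : val E true (insert v S) + 1 ≤ val E false S := by
  have hv' : v ∈ Finset.univ.filter (Legal E S) := Finset.mem_filter.mpr ⟨Finset.mem_univ v, hv⟩
  rw [val.eq_1 E false S, dif_pos ⟨v, hv'⟩, if_neg Bool.false_ne_true, add_comm]
  gcongr
  exact Finset.le_sup' (fun u : Finset.univ.filter (Legal E S) => val E true (insert u.1 S))
    (Finset.mem_attach _ ⟨v, hv'⟩)

theorem exists_val_true_eq (h : ∃ v, Legal E S v) :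
    ∃ v, Legal E S v ∧ val E true S = val E false (insert v S) + 1 := by
  have hL : (Finset.univ.filter (Legal E S)).Nonempty := by
    simpa only [Finset.filter_nonempty_iff, Finset.mem_univ, true_and] using h
  obtain ⟨u, -, hu⟩ := Finset.exists_mem_eq_inf' hL.attach fun u => val E false (insert u.1 S)
  exact ⟨u, (Finset.mem_filter.mp u.2).2, by rw [val, dif_pos hL, if_pos rfl, hu, add_comm]⟩

theorem exists_val_false_eq (h : ∃ v, Legal E S v) :
    ∃ v, Legal E S v ∧ val E false S = val E true (insert v S) + 1 := by
  have hL : (Finset.univ.filter (Legal E S)).Nonempty := by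
    simpa only [Finset.filter_nonempty_iff, Finset.mem_univ, true_and] using h
  obtain ⟨u, -, hu⟩ := Finset.exists_mem_eq_sup' hL.attach fun u => val E true (insert u.1 S)
  exact ⟨u, (Finset.mem_filter.mp u.2).2,
    by rw [val, dif_pos hL, if_neg Bool.false_ne_true, hu, add_comm]⟩

structure ValBounds (E : Finset (Finset V)) (S : Finset V) : Prop where
  anti : ∀ b T, liveEdges E T ⊆ liveEdges E S → val E b T ≤ val E b S
  true_le : val E true S ≤ val E false S + 1
  false_le : val E false S ≤ val E true S + 1

section Step

variable (ih : ∀ v, Legal E S v → ValBounds E (insert v S))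
include ih

theorem val_true_anti_of_succ (hT : liveEdges E T ⊆ liveEdges E S) :
    val E true T ≤ val E true S := by
  by_cases hmove : ∃ u, Legal E T u
  swap
  · simp [val_of_forall_not_legal (not_exists.mp hmove)]
  obtain ⟨v, hv, hvS⟩ := exists_val_true_eq (hmove.imp fun _ => Legal.mono_liveEdges hT)
  rw [hvS]
  by_cases hvT : Legal E T v
  · calc val E true T ≤ val E false (insert v T) + 1 := val_true_le hvT
      _ ≤ val E false (insert v S) + 1 := by
        gcongr
        exact (ih v hv).anti false _ (liveEdges_insert_subset_insert hT v)
  · calc val E true T ≤ val E true (insert v S) :=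
          (ih v hv).anti true _ (liveEdges_subset_insert_of_not_legal hvT hT)
      _ ≤ val E false (insert v S) + 1 := (ih v hv).true_le

theorem val_false_anti_of_succ (hT : liveEdges E T ⊆ liveEdges E S) :
    val E false T ≤ val E false S := by
  by_cases hmove : ∃ u, Legal E T u
  swap
  · simp [val_of_forall_not_legal (not_exists.mp hmove)]
  obtain ⟨w, hw, hwT⟩ := exists_val_false_eq hmove
  have hwS : Legal E S w := hw.mono_liveEdges hT
  calc val E false T = val E true (insert w T) + 1 := hwT
    _ ≤ val E true (insert w S) + 1 := by
      gcongr
      exact (ih w hwS).anti true _ (liveEdges_insert_subset_insert hT w)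
    _ ≤ val E false S := le_val_false hwS

theorem val_true_le_val_false_add_one_of_succ : val E true S ≤ val E false S + 1 := by
  by_cases hmove : ∃ u, Legal E S u
  swap
  · simp [val_of_forall_not_legal (not_exists.mp hmove)]
  obtain ⟨v, hv, hvS⟩ := exists_val_true_eq hmove
  calc val E true S = val E false (insert v S) + 1 := hvS
    _ ≤ val E true (insert v S) + 1 + 1 := by gcongr; exact (ih v hv).false_le
    _ ≤ val E false S + 1 := by gcongr; exact le_val_false hv

theorem val_false_le_val_true_add_one_of_succ : val E false S ≤ val E true S + 1 := by
  by_cases hmove : ∃ u, Legal E S u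
  swap
  · simp [val_of_forall_not_legal (not_exists.mp hmove)]
  obtain ⟨w, -, hwS⟩ := exists_val_false_eq hmove
  obtain ⟨v, hv, hvS⟩ := exists_val_true_eq hmove
  rw [hwS, hvS, add_le_add_iff_right]
  have hsub : liveEdges E (insert w S) ⊆ liveEdges E S := liveEdges_anti (Finset.subset_insert w S)
  -- After Staller's optimal `w`, Edge-hitter answers with his own optimal `v`, or skips if illegal.
  by_cases hvw : Legal E (insert w S) v
  · calc val E true (insert w S) ≤ val E false (insert v (insert w S)) + 1 := val_true_le hvw
      _ ≤ val E false (insert v S) + 1 := by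
        gcongr
        exact (ih v hv).anti false _ (liveEdges_insert_subset_insert hsub v)
  · calc val E true (insert w S) ≤ val E true (insert v S) :=
          (ih v hv).anti true _ (liveEdges_subset_insert_of_not_legal hvw hsub)
      _ ≤ val E false (insert v S) + 1 := (ih v hv).true_le

end Step

theorem card_sdiff_insert_lt (hv : v ∉ S) :
    (Finset.univ \ insert v S).card < (Finset.univ \ S).card := by
  rw [Finset.sdiff_insert]
  exact Finset.card_erase_lt_of_mem (by simpa using hv)

theorem valBounds (S : Finset V) : ValBounds E S :=
  have ih (v : V) (hv : Legal E S v) : ValBounds E (insert v S) :=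
    have : (Finset.univ \ insert v S).card < (Finset.univ \ S).card :=
      card_sdiff_insert_lt hv.not_mem
    valBounds (insert v S)
  { anti := fun b T hT => match b with
      | true => val_true_anti_of_succ ih hT
      | false => val_false_anti_of_succ ih hT
    true_le := val_true_le_val_false_add_one_of_succ ih
    false_le := val_false_le_val_true_add_one_of_succ ih }
termination_by (Finset.univ \ S).card

end TransversalGame

/-- For any hypergraph (given by its edge set `E`) and any starting set `A`, the
Edge-hitter-start game transversal number from `A` is at most the Staller-start
game transversal number from `A` plus one. -/
theorem tauG_le_tauG'_add_one {V : Type*} [Fintype V] (E : Finset (Finset V))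
    (A : Finset V) :
    TransversalGame.tauG E A ≤ TransversalGame.tauG' E A + 1 :=
  (TransversalGame.valBounds A).true_le
end
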